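/- arXiv:1912.07042 — 3 statements merged into one kernel-verified Lean document; each statement's English description precedes it below -/
import Mathlib

section
/- Correctness of the saturation construction for reconfigurable networks: for every broadcast protocol B = (Q, I, Σ, Δ) and every state q ∈ Q, q belongs to the saturation set S(B) if and only if there exists a reconfigurable execution of B covering {q}. Consequently, for any F ⊆ Q, there exists a reconfigurable execution covering F if and only if F ∩ S(B) ≠ ∅. -/
/-- A broadcast protocol over finite state set `Q` and finite message alphabet `M`.
`I` is the set of initial states, `br q m q'` means `(q, !!m, q') ∈ Δ` (a broadcast
transition) and `rcv q m q'` means `(q, ??m, q') ∈ Δ` (a reception transition).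
The protocol is complete for receptions. -/
structure BroadcastProtocol (Q M : Type) [Fintype Q] [DecidableEq Q] [Fintype M] where
  I : Finset Q
  br : Q → M → Q → Prop
  rcv : Q → M → Q → Prop
  complete : ∀ q m, ∃ q', rcv q m q'

section Execs
variable {Q M : Type} [Fintype Q] [DecidableEq Q] [Fintype M]

/-- A reconfigurable execution of length `r` over the finite node type `ν`:
`lab i v` is the state of node `v` in the `i`-th configuration, `edges i` is the
(symmetric, irreflexive) communication topology of the `i`-th configuration,
and in the `i`-th step node `sender i` broadcasts message `msg i` to its
neighbours; the topology may change arbitrarily at each step. -/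
structure RExec (P : BroadcastProtocol Q M) (ν : Type) [Fintype ν] [DecidableEq ν]
    (r : ℕ) where
  lab : Fin (r + 1) → ν → Q
  edges : Fin (r + 1) → ν → ν → Prop
  edges_symm : ∀ i, Symmetric (edges i)
  edges_irrefl : ∀ i, Irreflexive (edges i)
  sender : Fin r → ν
  msg : Fin r → M
  init : ∀ v, lab 0 v ∈ P.I
  step_br : ∀ i : Fin r, P.br (lab i.castSucc (sender i)) (msg i) (lab i.succ (sender i))
  step_rcv : ∀ i : Fin r, ∀ v, v ≠ sender i →
    (edges i.castSucc (sender i) v → P.rcv (lab i.castSucc v) (msg i) (lab i.succ v)) ∧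
    (¬ edges i.castSucc (sender i) v → lab i.succ v = lab i.castSucc v)

namespace RExec

variable {P : BroadcastProtocol Q M} {ν : Type} [Fintype ν] [DecidableEq ν] {r : ℕ}

/-- Labelling of the last configuration. -/
def lastLab (ρ : RExec P ν r) : ν → Q := ρ.lab (Fin.last r)

/-- The execution covers `F` if a node of the last configuration is labelled in `F`. -/
def Covers (ρ : RExec P ν r) (F : Set Q) : Prop := ∃ v, ρ.lastLab v ∈ F

/-- The active length of node `v`: the number of steps in which `v` broadcasts. -/
def activeLen (ρ : RExec P ν r) (v : ν) : ℕ :=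
  (Finset.univ.filter fun i : Fin r => ρ.sender i = v).card

end RExec

end Execs
/-- The saturation set `S(B)`: the least subset of `Q` containing `I` and closed
under the broadcast and reception rules. -/
inductive Sat {Q M : Type} [Fintype Q] [DecidableEq Q] [Fintype M]
    (P : BroadcastProtocol Q M) : Q → Prop
  | base (q : Q) : q ∈ P.I → Sat P q
  | broadcast (q₁ : Q) (m : M) (q₂ : Q) : Sat P q₁ → P.br q₁ m q₂ → Sat P q₂
  | reception (q₁ : Q) (m : M) (q₂ p₁ p₂ : Q) :
      Sat P q₁ → Sat P q₂ → Sat P p₁ → P.br q₁ m q₂ → P.rcv p₁ m p₂ → Sat P p₂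

/-! Soundness is by induction along the execution: the sender follows rule (i), and a receiver
follows rule (ii) with the sender's pre- and post-states as witnesses. For completeness the
topology can be chosen after the fact, one star around the sender per step, so it suffices to
reach labellings through topology-free steps. Such steps of executions on disjoint sets of nodes
interleave, so for rule (ii) we run an execution covering `q₁` next to one covering `q₁'` and let
a node in state `q₁` broadcast to the node in state `q₁'` alone. -/

section Saturation

variable {Q M : Type} [Fintype Q] [DecidableEq Q] [Fintype M] {P : BroadcastProtocol Q M}

theorem RExec.sat_lab {ν : Type} [Fintype ν] [DecidableEq ν] {r : ℕ} (ρ : RExec P ν r)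
    (i : Fin (r + 1)) (v : ν) : Sat P (ρ.lab i v) := by
  induction i using Fin.induction generalizing v with
  | zero => exact .base _ (ρ.init v)
  | succ j ih =>
    have hsender : Sat P (ρ.lab j.succ (ρ.sender j)) := .broadcast _ _ _ (ih _) (ρ.step_br j)
    by_cases hv : v = ρ.sender j
    · exact hv ▸ hsender
    obtain ⟨hrcv, hidle⟩ := ρ.step_rcv j v hv
    by_cases hedge : ρ.edges j.castSucc (ρ.sender j) v
    · exact .reception _ _ _ _ _ (ih _) hsender (ih v) (ρ.step_br j) (hrcv hedge)
    · exact hidle hedge ▸ ih v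

namespace BroadcastProtocol

def Step {ν : Type} (P : BroadcastProtocol Q M) (L L' : ν → Q) : Prop :=
  ∃ v m, P.br (L v) m (L' v) ∧ ∀ w, w ≠ v → P.rcv (L w) m (L' w) ∨ L' w = L w

def Reachable {ν : Type} (P : BroadcastProtocol Q M) (L : ν → Q) : Prop :=
  ∃ L₀ : ν → Q, (∀ v, L₀ v ∈ P.I) ∧ Relation.ReflTransGen P.Step L₀ L

variable {ν : Type}

theorem step_update_of_br [DecidableEq ν] {L : ν → Q} {v : ν} {m : M} {q : Q}
    (h : P.br (L v) m q) : P.Step L (Function.update L v q) :=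
  ⟨v, m, by rwa [Function.update_self], fun _ hw => .inr (Function.update_of_ne hw _ _)⟩

theorem step_update_update_of_br_of_rcv [DecidableEq ν] {L : ν → Q} {s t : ν} (hts : t ≠ s)
    {m : M} {q p : Q} (hbr : P.br (L s) m q) (hrcv : P.rcv (L t) m p) :
    P.Step L (Function.update (Function.update L s q) t p) := by
  refine ⟨s, m, by rwa [Function.update_of_ne hts.symm, Function.update_self], fun w hw => ?_⟩
  by_cases hwt : w = t
  · subst hwt
    exact .inl (by rwa [Function.update_self])
  · exact .inr (by rw [Function.update_of_ne hwt, Function.update_of_ne hw])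

theorem Step.append_left {k₁ k₂ : ℕ} {L₁ L₁' : Fin k₁ → Q} (h : P.Step L₁ L₁')
    (L₂ : Fin k₂ → Q) : P.Step (Fin.append L₁ L₂) (Fin.append L₁' L₂) := by
  obtain ⟨v, m, hbr, hrest⟩ := h
  refine ⟨Fin.castAdd k₂ v, m, by simpa only [Fin.append_left] using hbr, fun w => ?_⟩
  refine Fin.addCases (fun w₁ hw => ?_) (fun w₂ _ => .inr (by simp only [Fin.append_right])) w
  simpa only [Fin.append_left] using hrest w₁ (ne_of_apply_ne _ hw)

theorem Step.append_right {k₁ k₂ : ℕ} (L₁ : Fin k₁ → Q) {L₂ L₂' : Fin k₂ → Q}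
    (h : P.Step L₂ L₂') : P.Step (Fin.append L₁ L₂) (Fin.append L₁ L₂') := by
  obtain ⟨v, m, hbr, hrest⟩ := h
  refine ⟨Fin.natAdd k₁ v, m, by simpa only [Fin.append_right] using hbr, fun w => ?_⟩
  refine Fin.addCases (fun w₁ _ => .inr (by simp only [Fin.append_left])) (fun w₂ hw => ?_) w
  simpa only [Fin.append_right] using hrest w₂ (ne_of_apply_ne _ hw)

theorem Reachable.tail {L L' : ν → Q} (h : P.Reachable L) (hs : P.Step L L') :
    P.Reachable L' :=
  let ⟨L₀, hinit, hL⟩ := h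
  ⟨L₀, hinit, hL.tail hs⟩

theorem Reachable.append {k₁ k₂ : ℕ} {L₁ : Fin k₁ → Q} {L₂ : Fin k₂ → Q}
    (h₁ : P.Reachable L₁) (h₂ : P.Reachable L₂) : P.Reachable (Fin.append L₁ L₂) := by
  obtain ⟨L₁₀, hinit₁, hL₁⟩ := h₁
  obtain ⟨L₂₀, hinit₂, hL₂⟩ := h₂
  refine ⟨Fin.append L₁₀ L₂₀, Fin.addCases (by simpa only [Fin.append_left] using hinit₁)
    (by simpa only [Fin.append_right] using hinit₂), ?_⟩
  exact (hL₁.lift _ fun _ _ hs => hs.append_left L₂₀).trans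
    (hL₂.lift _ fun _ _ hs => hs.append_right L₁)

end BroadcastProtocol

open BroadcastProtocol

theorem Sat.exists_reachable {q : Q} (h : Sat P q) :
    ∃ (k : ℕ) (L : Fin k → Q) (v : Fin k), P.Reachable L ∧ L v = q := by
  induction h with
  | base q hq => exact ⟨1, fun _ => q, 0, ⟨_, fun _ => hq, .refl⟩, rfl⟩
  | broadcast q₁ m q₂ _ hbr ih =>
    obtain ⟨k, L, v, hL, rfl⟩ := ih
    exact ⟨k, _, v, hL.tail (step_update_of_br hbr), Function.update_self ..⟩
  | reception q₁ m q₂ p₁ p₂ _ _ _ hbr hrcv ih₁ _ ih₃ =>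
    obtain ⟨k₁, L₁, v₁, hL₁, rfl⟩ := ih₁
    obtain ⟨k₃, L₃, v₃, hL₃, rfl⟩ := ih₃
    have hts : Fin.natAdd k₁ v₃ ≠ Fin.castAdd k₃ v₁ := by
      simp only [Fin.ne_iff_vne, Fin.val_castAdd, Fin.val_natAdd]
      omega
    have hbr' : P.br (Fin.append L₁ L₃ (Fin.castAdd k₃ v₁)) m q₂ := by
      rwa [Fin.append_left]
    have hrcv' : P.rcv (Fin.append L₁ L₃ (Fin.natAdd k₁ v₃)) m p₂ := by
      rwa [Fin.append_right]
    exact ⟨k₁ + k₃, _, _, (hL₁.append hL₃).tail (step_update_update_of_br_of_rcv hts hbr' hrcv'),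
      Function.update_self ..⟩

namespace RExec

variable {ν : Type} [Fintype ν] [DecidableEq ν]

def initial (L : ν → Q) (hL : ∀ v, L v ∈ P.I) : RExec P ν 0 where
  lab _ := L
  edges _ := (⊥ : SimpleGraph ν).Adj
  edges_symm _ _ _ h := h.symm
  edges_irrefl _ _ := SimpleGraph.irrefl _
  sender := Fin.elim0
  msg := Fin.elim0
  init := hL
  step_br i := i.elim0
  step_rcv i := i.elim0

/-- The topology of the new step joins the sender `v` exactly to the nodes whose state
changes. -/
def snoc {r : ℕ} (ρ : RExec P ν r) (L' : ν → Q) (v : ν) (m : M)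
    (hbr : P.br (ρ.lastLab v) m (L' v))
    (hrest : ∀ w, w ≠ v → P.rcv (ρ.lastLab w) m (L' w) ∨ L' w = ρ.lastLab w) :
    RExec P ν (r + 1) where
  lab := Fin.snoc ρ.lab L'
  edges i := if h : (i : ℕ) < r then ρ.edges ⟨i, by omega⟩
    else (SimpleGraph.fromRel fun a b => a = v ∧ L' b ≠ ρ.lastLab b).Adj
  edges_symm i := by
    split
    exacts [ρ.edges_symm _, fun _ _ h => h.symm]
  edges_irrefl i := by
    split
    exacts [ρ.edges_irrefl _, fun _ => SimpleGraph.irrefl _]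
  sender := Fin.snoc ρ.sender v
  msg := Fin.snoc ρ.msg m
  init := ρ.init
  step_br := Fin.lastCases (by simpa [lastLab] using hbr) fun j => by
    simp only [Fin.succ_castSucc, Fin.snoc_castSucc]
    exact ρ.step_br j
  step_rcv := Fin.lastCases
    (fun w hw => by
      rw [Fin.snoc_last] at hw
      simp only [Fin.snoc_last, Fin.succ_last, Fin.snoc_castSucc, Fin.val_castSucc,
        Fin.val_last, lt_irrefl, dite_false, SimpleGraph.fromRel_adj, ne_eq, Ne.symm hw,
        not_false_eq_true, true_and, hw, false_and, or_false]
      exact ⟨(hrest w hw).resolve_right, not_not.mp⟩)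
    fun j => by
      simp only [Fin.snoc_castSucc, Fin.succ_castSucc, Fin.val_castSucc, j.isLt, dite_true]
      exact ρ.step_rcv j

theorem lastLab_snoc {r : ℕ} (ρ : RExec P ν r) (L' : ν → Q) (v : ν) (m : M)
    (hbr : P.br (ρ.lastLab v) m (L' v))
    (hrest : ∀ w, w ≠ v → P.rcv (ρ.lastLab w) m (L' w) ∨ L' w = ρ.lastLab w) :
    (ρ.snoc L' v m hbr hrest).lastLab = L' :=
  Fin.snoc_last (α := fun _ => ν → Q) ..

end RExec

theorem BroadcastProtocol.Reachable.exists_rexec {ν : Type} [Fintype ν] [DecidableEq ν]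
    {L : ν → Q} (h : P.Reachable L) : ∃ (r : ℕ) (ρ : RExec P ν r), ρ.lastLab = L := by
  obtain ⟨L₀, hinit, hL⟩ := h
  induction hL with
  | refl => exact ⟨0, .initial L₀ hinit, rfl⟩
  | tail _ hs ih =>
    obtain ⟨r, ρ, rfl⟩ := ih
    obtain ⟨v, m, hbr, hrest⟩ := hs
    exact ⟨r + 1, ρ.snoc _ v m hbr hrest, ρ.lastLab_snoc ..⟩

end Saturation

/-- **Correctness of the saturation construction for reconfigurable networks.**
A state `q` belongs to the saturation set `S(B)` iff some reconfigurable execution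
covers `{q}`; consequently, a set `F` of states is coverable by a reconfigurable
execution iff `F` meets the saturation set. -/
theorem saturation_correct_reconfigurable
    {Q M : Type} [Fintype Q] [DecidableEq Q] [Fintype M] (P : BroadcastProtocol Q M) :
    (∀ q : Q, Sat P q ↔ ∃ (k r : ℕ) (ρ : RExec P (Fin k) r), ρ.Covers {q}) ∧
    (∀ F : Set Q,
      (∃ (k r : ℕ) (ρ : RExec P (Fin k) r), ρ.Covers F) ↔ ∃ q ∈ F, Sat P q) := by
  have sat_iff (q : Q) : Sat P q ↔ ∃ (k r : ℕ) (ρ : RExec P (Fin k) r), ρ.Covers {q} := by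
    refine ⟨fun h => ?_, fun ⟨k, r, ρ, v, hv⟩ => Set.mem_singleton_iff.1 hv ▸ ρ.sat_lab _ v⟩
    obtain ⟨k, L, v, hL, rfl⟩ := h.exists_reachable
    obtain ⟨r, ρ, rfl⟩ := hL.exists_rexec
    exact ⟨k, r, ρ, v, rfl⟩
  refine ⟨sat_iff, fun F => ⟨fun ⟨k, r, ρ, v, hv⟩ => ⟨_, hv, ρ.sat_lab _ v⟩, ?_⟩⟩
  rintro ⟨q, hq, hsat⟩
  obtain ⟨k, r, ρ, v, hv⟩ := (sat_iff q).1 hsat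
  exact ⟨k, r, ρ, v, Set.mem_singleton_iff.1 hv ▸ hq⟩
end

section
/- Copycat property for lossy semantics: let ρ : γ_0 →_L γ_1 →_L ⋯ →_L γ_r be a lossy execution of a broadcast protocol B, with last configuration γ_r = (N, E, L). Then for every state q in the image of L and every node n^q ∈ N with L(n^q) = q, there exist s ∈ ℕ and a lossy execution ρ' : γ'_0 →_L ⋯ →_L γ'_s with last configuration γ'_s = (N', E', L') such that |N'| = |N| + 1, there is an injection ι : N → N' with L'(ι(n)) = L(n) for every n ∈ N, and the extra node n_f ∈ N' \ ι(N) satisfies: L'(n_f) = q; for every n ∈ N, (n_f, ι(n)) ∈ E' if and only if (n^q, n) ∈ E; a_{ρ'}(n_f) = a_ρ(n^q); and ra_{ρ'}(n_f) = 0. -/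
section Execs
variable {Q M : Type} [Fintype Q] [DecidableEq Q] [Fintype M]

/-- A lossy execution of length `r` over the finite node type `ν`: the communication
topology `E` is fixed throughout, and in the `i`-th step node `sender i` broadcasts
message `msg i`, which is lost (reaching no node) iff `lost i = true`. -/
structure LExec (P : BroadcastProtocol Q M) (ν : Type) [Fintype ν] [DecidableEq ν]
    (r : ℕ) where
  lab : Fin (r + 1) → ν → Q
  E : ν → ν → Prop
  E_symm : Symmetric E
  E_irrefl : Irreflexive E
  sender : Fin r → ν
  msg : Fin r → M
  lost : Fin r → Bool
  init : ∀ v, lab 0 v ∈ P.I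
  step_br : ∀ i : Fin r, P.br (lab i.castSucc (sender i)) (msg i) (lab i.succ (sender i))
  step_lost : ∀ i : Fin r, lost i = true → ∀ v, v ≠ sender i →
    lab i.succ v = lab i.castSucc v
  step_real : ∀ i : Fin r, lost i = false → ∀ v, v ≠ sender i →
    (E (sender i) v → P.rcv (lab i.castSucc v) (msg i) (lab i.succ v)) ∧
    (¬ E (sender i) v → lab i.succ v = lab i.castSucc v)

namespace LExec

variable {P : BroadcastProtocol Q M} {ν : Type} [Fintype ν] [DecidableEq ν] {r : ℕ}

/-- Labelling of the last configuration. -/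
def lastLab (ρ : LExec P ν r) : ν → Q := ρ.lab (Fin.last r)

/-- The execution covers `F` if a node of the last configuration is labelled in `F`. -/
def Covers (ρ : LExec P ν r) (F : Set Q) : Prop := ∃ v, ρ.lastLab v ∈ F

/-- The active length of node `v`: the number of broadcasts (lost or not) of `v`. -/
def activeLen (ρ : LExec P ν r) (v : ν) : ℕ :=
  (Finset.univ.filter fun i : Fin r => ρ.sender i = v).card

/-- The real active length of node `v`: the number of non-lost broadcasts of `v`. -/
def realActiveLen (ρ : LExec P ν r) (v : ν) : ℕ :=
  (Finset.univ.filter fun i : Fin r => ρ.sender i = v ∧ ρ.lost i = false).card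

end LExec

end Execs

/-!
The copy `none` of `nq` gets exactly the neighbours of `nq`, so it receives exactly what `nq`
receives. Replay `ρ` step by step on `Option ν`; whenever `nq` broadcasts, `some nq` broadcasts
first (the copy is not adjacent to it, as `E` is irreflexive, so it is untouched) and then the
copy performs the same transition as a lost broadcast. The copy thus broadcasts exactly as often
as `nq`, always lossily.
-/

open Function

section Steps
variable {Q M : Type} [Fintype Q] [DecidableEq Q] [Fintype M]

structure BroadcastProtocol.LossyStep (P : BroadcastProtocol Q M) {ν : Type} (E : ν → ν → Prop)
    (lab : ν → Q) (n : ν) (m : M) (l : Bool) (lab' : ν → Q) : Prop where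
  br : P.br (lab n) m (lab' n)
  lost : l = true → ∀ v, v ≠ n → lab' v = lab v
  real : l = false → ∀ v, v ≠ n →
    (E n v → P.rcv (lab v) m (lab' v)) ∧ (¬ E n v → lab' v = lab v)

namespace BroadcastProtocol.LossyStep

variable {P : BroadcastProtocol Q M} {ν ν' : Type} {E : ν → ν → Prop}
  {lab lab' : ν → Q} {n : ν} {m : M} {l : Bool}

theorem update_of_br [DecidableEq ν] {q' : Q} (hbr : P.br (lab n) m q') :
    P.LossyStep E lab n m true (update lab n q') :=
  ⟨by simpa using hbr, fun _ v hv => update_of_ne hv _ _, fun h => absurd h (by simp)⟩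

theorem comp (h : P.LossyStep E lab n m l lab') (f : ν' → ν) (n' : ν') (hn : f n' = n)
    (hfib : ∀ v, f v = n → v = n') :
    P.LossyStep (E on f) (lab ∘ f) n' m l (lab' ∘ f) := by
  subst hn
  have hne : ∀ v, v ≠ n' → f v ≠ f n' := fun v hv hf => hv (hfib v hf)
  exact ⟨h.br, fun hl v hv => h.lost hl (f v) (hne v hv),
    fun hl v hv => h.real hl (f v) (hne v hv)⟩

theorem copy_sender [DecidableEq ν] (h : P.LossyStep E lab n m l lab') (hirr : ¬ E n n) :
    P.LossyStep (E on (Option.getD · n)) (lab ∘ (Option.getD · n)) (some n) m l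
      (update (lab' ∘ (Option.getD · n)) none (lab n)) := by
  refine ⟨by simpa using h.br, ?_, ?_⟩
  · rintro hl (_ | v) hv
    · simp
    · simpa using h.lost hl v (by simpa using hv)
  · rintro hl (_ | v) hv
    · exact ⟨fun hE => absurd hE hirr, fun _ => by simp⟩
    · simpa [onFun] using h.real hl v (by simpa using hv)

end BroadcastProtocol.LossyStep

end Steps

namespace LExec

variable {Q M : Type} [Fintype Q] [DecidableEq Q] [Fintype M]
  {P : BroadcastProtocol Q M} {ν : Type} [Fintype ν] [DecidableEq ν] {r : ℕ}

theorem step (ρ : LExec P ν r) (i : Fin r) :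
    P.LossyStep ρ.E (ρ.lab i.castSucc) (ρ.sender i) (ρ.msg i) (ρ.lost i) (ρ.lab i.succ) :=
  ⟨ρ.step_br i, ρ.step_lost i, ρ.step_real i⟩

def ofSteps (lab : Fin (r + 1) → ν → Q) (E : ν → ν → Prop) (hsymm : ∀ ⦃a b⦄, E a b → E b a)
    (hirr : ∀ a, ¬ E a a) (sender : Fin r → ν) (msg : Fin r → M) (lost : Fin r → Bool)
    (hinit : ∀ v, lab 0 v ∈ P.I)
    (hstep : ∀ i, P.LossyStep E (lab i.castSucc) (sender i) (msg i) (lost i) (lab i.succ)) :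
    LExec P ν r :=
  ⟨lab, E, hsymm, hirr, sender, msg, lost, hinit, fun i => (hstep i).br,
    fun i => (hstep i).lost, fun i => (hstep i).real⟩

def dropLast (ρ : LExec P ν (r + 1)) : LExec P ν r :=
  ofSteps (fun t => ρ.lab t.castSucc) ρ.E ρ.E_symm ρ.E_irrefl (fun i => ρ.sender i.castSucc)
    (fun i => ρ.msg i.castSucc) (fun i => ρ.lost i.castSucc) ρ.init
    (fun i => by simpa only [← Fin.succ_castSucc] using ρ.step i.castSucc)

theorem lastStep (ρ : LExec P ν (r + 1)) :
    P.LossyStep ρ.E ρ.dropLast.lastLab (ρ.sender (Fin.last r)) (ρ.msg (Fin.last r))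
      (ρ.lost (Fin.last r)) ρ.lastLab := by
  have h := ρ.step (Fin.last r)
  rw [Fin.succ_last] at h
  exact h

theorem activeLen_eq_dropLast_add (ρ : LExec P ν (r + 1)) (v : ν) :
    ρ.activeLen v = ρ.dropLast.activeLen v + if ρ.sender (Fin.last r) = v then 1 else 0 := by
  simp only [activeLen, Finset.card_filter, Fin.sum_univ_castSucc]
  rfl

def snoc (ρ : LExec P ν r) (n : ν) (m : M) (l : Bool) (lab' : ν → Q)
    (h : P.LossyStep ρ.E ρ.lastLab n m l lab') : LExec P ν (r + 1) :=
  ofSteps (Fin.snoc ρ.lab lab') ρ.E ρ.E_symm ρ.E_irrefl (Fin.snoc ρ.sender n)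
    (Fin.snoc ρ.msg m) (Fin.snoc ρ.lost l)
    (by simpa only [← Fin.castSucc_zero, Fin.snoc_castSucc] using ρ.init)
    (Fin.lastCases (by simpa [lastLab] using h) fun i => by
      simpa only [Fin.succ_castSucc, Fin.snoc_castSucc] using ρ.step i)

section Snoc
variable (ρ : LExec P ν r) (n : ν) (m : M) (l : Bool) (lab' : ν → Q)
  (h : P.LossyStep ρ.E ρ.lastLab n m l lab')

@[simp] theorem snoc_E : (ρ.snoc n m l lab' h).E = ρ.E := rfl

@[simp] theorem snoc_lastLab : (ρ.snoc n m l lab' h).lastLab = lab' := by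
  simp [lastLab, snoc, ofSteps]

theorem snoc_activeLen (v : ν) :
    (ρ.snoc n m l lab' h).activeLen v = ρ.activeLen v + if n = v then 1 else 0 := by
  simp only [activeLen, Finset.card_filter, Fin.sum_univ_castSucc]
  simp [snoc, ofSteps]

theorem snoc_realActiveLen (v : ν) :
    (ρ.snoc n m l lab' h).realActiveLen v
      = ρ.realActiveLen v + if n = v ∧ l = false then 1 else 0 := by
  simp only [realActiveLen, Finset.card_filter, Fin.sum_univ_castSucc]
  simp [snoc, ofSteps]

end Snoc

theorem exists_copycat (ρ : LExec P ν r) (nq : ν) :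
    ∃ (s : ℕ) (ρ' : LExec P (Option ν) s),
      ρ'.E = (ρ.E on (Option.getD · nq)) ∧ ρ'.lastLab = ρ.lastLab ∘ (Option.getD · nq) ∧
      ρ'.activeLen none = ρ.activeLen nq ∧ ρ'.realActiveLen none = 0 := by
  induction r with
  | zero =>
    refine ⟨0, ofSteps (fun _ => ρ.lab 0 ∘ (Option.getD · nq)) _ (fun _ _ h => ρ.E_symm h)
      (fun _ => ρ.E_irrefl _) Fin.elim0 Fin.elim0 Fin.elim0 (fun _ => ρ.init _) (fun i => i.elim0),
      rfl, rfl, ?_, ?_⟩ <;> simp [activeLen, realActiveLen]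
  | succ r ih =>
    obtain ⟨s, ρ', hE, hlab, hact, hreal⟩ := ih ρ.dropLast
    have hstep := ρ.lastStep
    set n := ρ.sender (Fin.last r)
    by_cases hn : n = nq
    · subst hn
      let ρ₁ := ρ'.snoc (some n) _ _ _ (hE ▸ hlab ▸ hstep.copy_sender (ρ.E_irrefl n))
      have hbr : P.br (ρ₁.lastLab none) (ρ.msg (Fin.last r)) (ρ.lastLab n) := by
        simpa [ρ₁] using hstep.br
      refine ⟨s + 2, ρ₁.snoc none _ _ _ (.update_of_br hbr), hE, ?_, ?_, ?_⟩
      · simp [ρ₁]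
      · simp [snoc_activeLen, ρ₁, hact, activeLen_eq_dropLast_add ρ n, n]
      · simp [snoc_realActiveLen, ρ₁, hreal]
    · have hfib : ∀ v : Option ν, v.getD nq = n → v = some n := by
        rintro (_ | v) hv
        · exact absurd hv.symm hn
        · simpa using hv
      refine ⟨s + 1, ρ'.snoc (some n) _ _ _
        (hE ▸ hlab ▸ hstep.comp (Option.getD · nq) (some n) rfl hfib), hE, by simp, ?_, ?_⟩
      · simp [snoc_activeLen, hact, activeLen_eq_dropLast_add ρ nq, n, hn]
      · simp [snoc_realActiveLen, hreal]

end LExec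

/-- **Copycat property for lossy semantics.** Given a lossy execution `ρ` whose last
configuration labels the node `nq` with the state `q`, there is a lossy execution
`ρ'` of some length `s` over the node set `Option ν` (one more node), such that the
injection `some : ν → Option ν` preserves the final labels, the extra node `none`
ends labelled `q`, is connected to `some n` exactly when `nq` is connected to `n`
in `ρ`, has the same active length as `nq`, and performs no real (non-lost)
broadcast. -/
theorem copycat_lossy
    {Q M : Type} [Fintype Q] [DecidableEq Q] [Fintype M]
    (P : BroadcastProtocol Q M) (ν : Type) [Fintype ν] [DecidableEq ν]
    (r : ℕ) (ρ : LExec P ν r) (q : Q) (nq : ν) (hnq : ρ.lastLab nq = q) :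
    ∃ (s : ℕ) (ρ' : LExec P (Option ν) s),
      Fintype.card (Option ν) = Fintype.card ν + 1 ∧
      Function.Injective (some : ν → Option ν) ∧
      (∀ n : ν, ρ'.lastLab (some n) = ρ.lastLab n) ∧
      ρ'.lastLab none = q ∧
      (∀ n : ν, ρ'.E none (some n) ↔ ρ.E nq n) ∧
      ρ'.activeLen none = ρ.activeLen nq ∧
      ρ'.realActiveLen none = 0 := by
  obtain ⟨s, ρ', hE, hlab, hact, hreal⟩ := ρ.exists_copycat nq
  refine ⟨s, ρ', Fintype.card_option, Option.some_injective ν, fun n => ?_, ?_,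
    fun n => by rw [hE]; rfl, hact, hreal⟩
  · rw [hlab]; rfl
  · rw [hlab, ← hnq]; rfl
end

section
/- The reconfigurable and lossy semantics cover the same states: for every broadcast protocol B = (Q, I, Σ, Δ) and every F ⊆ Q, there exists a reconfigurable execution of B covering F if and only if there exists a lossy execution of B covering F. -/
open Relation SimpleGraph

theorem Relation.ReflTransGen.exists_fin_path {α : Type*} {R : α → α → Prop} {a b : α}
    (h : ReflTransGen R a b) :
    ∃ (r : ℕ) (f : Fin (r + 1) → α), f 0 = a ∧ f (Fin.last r) = b ∧
      ∀ i : Fin r, R (f i.castSucc) (f i.succ) := by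
  induction h with
  | refl => exact ⟨0, fun _ => a, rfl, rfl, fun i => i.elim0⟩
  | @tail b c _ hcd ih =>
    obtain ⟨r, f, hf0, hfr, hf⟩ := ih
    refine ⟨r + 1, Fin.snoc f c, by simpa using hf0, by simp, fun i => ?_⟩
    induction i using Fin.lastCases with
    | last => simpa [hfr] using hcd
    | cast i => rw [Fin.succ_castSucc, Fin.snoc_castSucc, Fin.snoc_castSucc]; exact hf i

namespace BroadcastProtocol

variable {Q M : Type} [Fintype Q] [DecidableEq Q] [Fintype M] (P : BroadcastProtocol Q M)

inductive Saturation : Q → Prop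
  | init {q} : q ∈ P.I → Saturation q
  | broadcast {q m q'} : Saturation q → P.br q m q' → Saturation q'
  | receive {q p m p' q'} :
      Saturation q → Saturation p → P.br p m p' → P.rcv q m q' → Saturation q'

variable {ν : Type}

def Broadcasts (G : SimpleGraph ν) (n : ν) (m : M) (L L' : ν → Q) : Prop :=
  P.br (L n) m (L' n) ∧
    ∀ v ≠ n, (G.Adj n v → P.rcv (L v) m (L' v)) ∧ (¬ G.Adj n v → L' v = L v)

/-- A lossy step in the fixed topology `G` in which only the nodes of `S` may deliver their
message; a lost broadcast is a broadcast in the empty graph. -/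
def LossyStep_s10 (G : SimpleGraph ν) (S : Set ν) (L L' : ν → Q) : Prop :=
  ∃ n m, P.Broadcasts ⊥ n m L L' ∨ (n ∈ S ∧ P.Broadcasts G n m L L')

def QuietlyCoverable (q : Q) : Prop :=
  ∃ (ν : Type) (_ : Finite ν) (G : SimpleGraph ν) (L₀ L : ν → Q) (a : ν),
    (∀ v, L₀ v ∈ P.I) ∧ ReflTransGen (P.LossyStep_s10 G {a}ᶜ) L₀ L ∧ L a = q

variable {P}

theorem exists_broadcasts (G : SimpleGraph ν) {L : ν → Q} {n : ν} {m : M} {q : Q}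
    (h : P.br (L n) m q) : ∃ L', P.Broadcasts G n m L L' := by
  classical
  choose receive hreceive using P.complete
  refine ⟨Function.update (fun v => if G.Adj n v then receive (L v) m else L v) n q,
    by simpa using h, fun v hv => ?_⟩
  simp only [Function.update_of_ne hv]
  exact ⟨fun hnv => by simpa [hnv] using hreceive (L v) m, fun hnv => by simp [hnv]⟩

theorem lossyStep_of_broadcasts_bot {G : SimpleGraph ν} {S : Set ν} {L L' : ν → Q} {n : ν}
    {m : M} (h : P.Broadcasts ⊥ n m L L') : P.LossyStep_s10 G S L L' :=
  ⟨n, m, .inl h⟩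

section Sum

variable {νA νB : Type}

theorem Broadcasts.sum_elim_inl {GA : SimpleGraph νA} {H : SimpleGraph (νA ⊕ νB)} {n : νA}
    {m : M} {LA LA' : νA → Q} (h : P.Broadcasts GA n m LA LA') (LB : νB → Q)
    (hA : ∀ v, H.Adj (.inl n) (.inl v) ↔ GA.Adj n v) (hB : ∀ w, ¬ H.Adj (.inl n) (.inr w)) :
    P.Broadcasts H (.inl n) m (Sum.elim LA LB) (Sum.elim LA' LB) := by
  refine ⟨h.1, ?_⟩
  rintro (v | w) hv
  · simpa only [hA, Sum.elim_inl] using h.2 v fun hvn => hv (congrArg _ hvn)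
  · simp [hB w]

theorem Broadcasts.sum_elim_inr {GB : SimpleGraph νB} {H : SimpleGraph (νA ⊕ νB)} {n : νB}
    {m : M} {LB LB' : νB → Q} (h : P.Broadcasts GB n m LB LB') {LA LA' : νA → Q}
    (hA : ∀ v, (H.Adj (.inr n) (.inl v) → P.rcv (LA v) m (LA' v)) ∧
      (¬ H.Adj (.inr n) (.inl v) → LA' v = LA v))
    (hB : ∀ w, H.Adj (.inr n) (.inr w) ↔ GB.Adj n w) :
    P.Broadcasts H (.inr n) m (Sum.elim LA LB) (Sum.elim LA' LB') := by
  refine ⟨h.1, ?_⟩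
  rintro (v | w) hv
  · exact hA v
  · simpa only [hB, Sum.elim_inr] using h.2 w fun hwn => hv (congrArg _ hwn)

variable {GA : SimpleGraph νA} {GB : SimpleGraph νB} {a : νA} {b : νB}

theorem LossyStep_s10.sum_sup_edge_inl {LA LA' : νA → Q} (h : P.LossyStep_s10 GA {a}ᶜ LA LA')
    (LB : νB → Q) :
    P.LossyStep_s10 (GA.sum GB ⊔ edge (.inl a) (.inr b)) {.inl a}ᶜ
      (Sum.elim LA LB) (Sum.elim LA' LB) := by
  obtain ⟨n, m, h | ⟨hn, h⟩⟩ := h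
  · exact lossyStep_of_broadcasts_bot (h.sum_elim_inl LB (by simp) (by simp))
  · have hna : n ≠ a := hn
    exact ⟨.inl n, m, .inr ⟨by simpa using hna,
      h.sum_elim_inl LB (fun v => by simp [edge_adj]) fun w => by simp [edge_adj, hna]⟩⟩

theorem LossyStep_s10.sum_sup_edge_inr {LB LB' : νB → Q} (h : P.LossyStep_s10 GB {b}ᶜ LB LB')
    (LA : νA → Q) :
    P.LossyStep_s10 (GA.sum GB ⊔ edge (.inl a) (.inr b)) {.inl a}ᶜ
      (Sum.elim LA LB) (Sum.elim LA LB') := by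
  obtain ⟨n, m, h | ⟨hn, h⟩⟩ := h
  · exact lossyStep_of_broadcasts_bot (h.sum_elim_inr (by simp) (by simp))
  · have hnb : n ≠ b := hn
    exact ⟨.inr n, m, .inr ⟨by simp,
      h.sum_elim_inr (fun v => by simp [edge_adj, hnb]) fun w => by simp [edge_adj]⟩⟩

theorem exists_broadcasts_sum_sup_edge [DecidableEq νA] {LA : νA → Q} {LB : νB → Q} {m : M}
    {p' q' : Q} (hbr : P.br (LB b) m p') (hrcv : P.rcv (LA a) m q') :
    ∃ LB', P.Broadcasts (GA.sum GB ⊔ edge (.inl a) (.inr b)) (.inr b) m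
      (Sum.elim LA LB) (Sum.elim (Function.update LA a q') LB') := by
  obtain ⟨LB', h⟩ := exists_broadcasts GB hbr
  refine ⟨LB', h.sum_elim_inr (fun v => ?_) (fun w => by simp [edge_adj])⟩
  by_cases hv : v = a
  · subst hv; simpa [edge_adj] using hrcv
  · simp [edge_adj, hv]

end Sum

theorem QuietlyCoverable.of_mem_init {q : Q} (hq : q ∈ P.I) : P.QuietlyCoverable q :=
  ⟨Unit, inferInstance, ⊥, fun _ => q, fun _ => q, (), fun _ => hq, .refl, rfl⟩

theorem QuietlyCoverable.broadcast {q q' : Q} {m : M} (h : P.QuietlyCoverable q)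
    (hbr : P.br q m q') : P.QuietlyCoverable q' := by
  classical
  obtain ⟨ν, hν, G, L₀, L, a, h₀, hL, rfl⟩ := h
  have hstep : P.Broadcasts ⊥ a m L (Function.update L a q') :=
    ⟨by simpa using hbr, fun v hv => by simp [hv]⟩
  exact ⟨ν, hν, G, L₀, _, a, h₀, hL.tail (lossyStep_of_broadcasts_bot hstep), by simp⟩

theorem QuietlyCoverable.receive {q p p' q' : Q} {m : M} (hq : P.QuietlyCoverable q)
    (hp : P.QuietlyCoverable p) (hbr : P.br p m p') (hrcv : P.rcv q m q') :
    P.QuietlyCoverable q' := by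
  classical
  obtain ⟨νA, _, GA, L₀A, LA, a, h₀A, hA, rfl⟩ := hq
  obtain ⟨νB, _, GB, L₀B, LB, b, h₀B, hB, rfl⟩ := hp
  obtain ⟨LB', hlast⟩ := exists_broadcasts_sum_sup_edge (GA := GA) (GB := GB) hbr hrcv
  have runA := hA.lift (fun L => Sum.elim L L₀B) fun _ _ h =>
    h.sum_sup_edge_inl (GB := GB) (b := b) L₀B
  have runB := hB.lift (fun L => Sum.elim LA L) fun _ _ h =>
    h.sum_sup_edge_inr (GA := GA) (a := a) LA
  refine ⟨νA ⊕ νB, inferInstance, _, Sum.elim L₀A L₀B, _, .inl a, ?_,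
    (runA.trans runB).tail ⟨.inr b, m, .inr ⟨by simp, hlast⟩⟩, by simp⟩
  rintro (v | w)
  exacts [h₀A v, h₀B w]

theorem Saturation.quietlyCoverable {q : Q} (h : P.Saturation q) : P.QuietlyCoverable q := by
  induction h with
  | init hq => exact .of_mem_init hq
  | broadcast _ hbr ih => exact ih.broadcast hbr
  | receive _ _ hbr hrcv ihq ihp => exact ihq.receive ihp hbr hrcv

end BroadcastProtocol

section Executions

variable {Q M : Type} [Fintype Q] [DecidableEq Q] [Fintype M] {P : BroadcastProtocol Q M}
  {ν : Type} [Fintype ν] [DecidableEq ν] {r : ℕ}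

theorem RExec.saturation_lab (ρ : RExec P ν r) (i : Fin (r + 1)) (v : ν) :
    P.Saturation (ρ.lab i v) := by
  induction i using Fin.induction generalizing v with
  | zero => exact .init (ρ.init v)
  | succ i ih =>
    by_cases hv : v = ρ.sender i
    · subst hv
      exact .broadcast (ih _) (ρ.step_br i)
    by_cases he : ρ.edges i.castSucc (ρ.sender i) v
    · exact .receive (ih v) (ih _) (ρ.step_br i) ((ρ.step_rcv i v hv).1 he)
    · rw [(ρ.step_rcv i v hv).2 he]
      exact ih v

namespace LExec

/-- Lost broadcasts are emitted in a topology without edges. -/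
def toRExec (ρ : LExec P ν r) : RExec P ν r where
  lab := ρ.lab
  edges j v w := ρ.E v w ∧ ∀ i : Fin r, i.castSucc = j → ρ.lost i = false
  edges_symm _ _ _ h := ⟨ρ.E_symm h.1, h.2⟩
  edges_irrefl _ v h := ρ.E_irrefl v h.1
  sender := ρ.sender
  msg := ρ.msg
  init := ρ.init
  step_br := ρ.step_br
  step_rcv i v hv := by
    cases hi : ρ.lost i
    · simpa [hi] using ρ.step_real i hi v hv
    · simp [hi, ρ.step_lost i hi v hv]

def relabel (ρ : LExec P ν r) {ν' : Type} [Fintype ν'] [DecidableEq ν'] (e : ν ≃ ν') :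
    LExec P ν' r where
  lab i := ρ.lab i ∘ e.symm
  E v w := ρ.E (e.symm v) (e.symm w)
  E_symm _ _ h := ρ.E_symm h
  E_irrefl _ := ρ.E_irrefl _
  sender i := e (ρ.sender i)
  msg := ρ.msg
  lost := ρ.lost
  init _ := ρ.init _
  step_br i := by simpa using ρ.step_br i
  step_lost i hi v hv := ρ.step_lost i hi _ (e.symm_apply_eq.not.mpr hv)
  step_real i hi v hv := by simpa using ρ.step_real i hi _ (e.symm_apply_eq.not.mpr hv)

theorem Covers.relabel {ρ : LExec P ν r} {F : Set Q} (h : ρ.Covers F) {ν' : Type} [Fintype ν']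
    [DecidableEq ν'] (e : ν ≃ ν') : (ρ.relabel e).Covers F := by
  obtain ⟨v, hv⟩ := h
  exact ⟨e v, by simpa [lastLab, LExec.relabel] using hv⟩

theorem exists_lastLab_eq_of_reflTransGen {G : SimpleGraph ν} {S : Set ν} {L₀ L : ν → Q}
    (h₀ : ∀ v, L₀ v ∈ P.I) (h : ReflTransGen (P.LossyStep_s10 G S) L₀ L) :
    ∃ (r : ℕ) (ρ : LExec P ν r), ρ.lastLab = L := by
  classical
  obtain ⟨r, f, hf₀, hfr, hstep⟩ := h.exists_fin_path
  choose n m hnm using hstep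
  refine ⟨r,
    { lab := f
      E := G.Adj
      E_symm := fun _ _ => G.adj_symm
      E_irrefl := fun _ => G.irrefl
      sender := n
      msg := m
      lost i := decide (P.Broadcasts ⊥ (n i) (m i) (f i.castSucc) (f i.succ))
      init := hf₀ ▸ h₀
      step_br i := by rcases hnm i with h | ⟨-, h⟩ <;> exact h.1
      step_lost i hi v hv := ((of_decide_eq_true hi).2 v hv).2 id
      step_real i hi v hv := ((hnm i).resolve_left (of_decide_eq_false hi)).2.2 v hv }, hfr⟩

end LExec

theorem BroadcastProtocol.QuietlyCoverable.exists_lExec_covers {q : Q} {F : Set Q}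
    (h : P.QuietlyCoverable q) (hq : q ∈ F) :
    ∃ (k r : ℕ) (ρ : LExec P (Fin k) r), ρ.Covers F := by
  classical
  obtain ⟨ν, _, G, L₀, L, a, h₀, hL, rfl⟩ := h
  have := Fintype.ofFinite ν
  obtain ⟨r, ρ, hρ⟩ := LExec.exists_lastLab_eq_of_reflTransGen h₀ hL
  exact ⟨_, r, _, (show ρ.Covers F from ⟨a, hρ ▸ hq⟩).relabel (Fintype.equivFin ν)⟩

end Executions

/-- **The reconfigurable and lossy semantics cover the same states:** a set `F` of
states of a broadcast protocol is coverable by a reconfigurable execution iff it is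
coverable by a lossy execution. -/
theorem reconfigurable_cover_iff_lossy_cover
    {Q M : Type} [Fintype Q] [DecidableEq Q] [Fintype M] (P : BroadcastProtocol Q M)
    (F : Set Q) :
    (∃ (k r : ℕ) (ρ : RExec P (Fin k) r), ρ.Covers F) ↔
    (∃ (k r : ℕ) (ρ : LExec P (Fin k) r), ρ.Covers F) := by
  constructor
  · rintro ⟨k, r, ρ, v, hv⟩
    exact (ρ.saturation_lab _ v).quietlyCoverable.exists_lExec_covers hv
  · rintro ⟨k, r, ρ, hρ⟩
    exact ⟨k, r, ρ.toRExec, hρ⟩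
end
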